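/- Let A and B be rings, M an (A,B)-bimodule and N a (B,A)-bimodule, with M ⊗_B N ≅ A ⊕ X as (A,A)-bimodules and N ⊗_A M ≅ B ⊕ Y as (B,B)-bimodules. Then the (T₂(A), T₂(B))-bimodule T₂(M) of upper triangular 2×2 matrices with entries in M satisfies T₂(M) ⊗_{T₂(B)} T₂(N) ≅ T₂(A) ⊕ T₂(X) as T₂(A)-bimodules, where T₂(R) denotes the ring of upper triangular 2×2 matrices over R and T₂(U) the corresponding bimodule of upper triangular matrices with entries in the bimodule U. -/

import Mathlib

set_option maxHeartbeats 1000000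
set_option synthInstance.maxHeartbeats 1000000

open TensorProduct MulOpposite

section pd
universe v
/-- `pdLE R n M` : `M` has projective dimension at most `n` as an `R`-module. -/
def pdLE (R : Type*) [Ring R] : (n : ℕ) → (M : Type v) → [AddCommGroup M] → [Module R M] → Prop
  | 0, M, _, _ => Module.Projective R M
  | n+1, M, _, _ => ∃ (P : Type v) (_ : AddCommGroup P) (_ : Module R P) (f : P →ₗ[R] M),
      Module.Projective R P ∧ Function.Surjective f ∧ pdLE R n (LinearMap.ker f)
end pd

section BT
variable (R : Type*) [Ring R]
variable (M : Type*) [AddCommGroup M] [Module Rᵐᵒᵖ M]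
variable (N : Type*) [AddCommGroup N] [Module R N]

/-- The balancing relations for the tensor product `M ⊗_R N` of a right `R`-module `M`
and a left `R`-module `N` over a (possibly noncommutative) ring `R`. -/
def balRel : @Submodule ℤ (M ⊗[ℤ] N) _ _ TensorProduct.instModule :=
  @Submodule.span ℤ (M ⊗[ℤ] N) _ _ TensorProduct.instModule {x | ∃ (m : M) (r : R) (n : N), x = (op r • m) ⊗ₜ[ℤ] n - m ⊗ₜ[ℤ] (r • n)}

/-- The balanced tensor product `M ⊗_R N` over a (possibly noncommutative) ring `R`:
the quotient of `M ⊗_ℤ N` by the balancing relations. -/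
def BalancedTensor := (M ⊗[ℤ] N) ⧸ balRel R M N

noncomputable instance : AddCommGroup (BalancedTensor R M N) :=
  inferInstanceAs (AddCommGroup ((M ⊗[ℤ] N) ⧸ balRel R M N))

/-- The class of `m ⊗ n` in the balanced tensor product. -/
noncomputable def BalancedTensor.mk (m : M) (n : N) : BalancedTensor R M N :=
  Submodule.Quotient.mk (m ⊗ₜ[ℤ] n)

namespace BalancedTensor

section left
variable (S : Type*) [Ring S] [Module S M] [SMulCommClass S Rᵐᵒᵖ M]

lemma lsmul_le (s : S) : balRel R M N ≤ Submodule.comap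
    (TensorProduct.map ((DistribMulAction.toAddMonoidHom M s).toIntLinearMap) LinearMap.id)
    (balRel R M N) := by
  refine Submodule.span_le.2 ?_
  rintro x ⟨m, r, n, rfl⟩
  simp only [SetLike.mem_coe, Submodule.mem_comap, map_sub, TensorProduct.map_tmul,
    AddMonoidHom.coe_toIntLinearMap, DistribMulAction.toAddMonoidHom_apply,
    LinearMap.id_coe, id_eq]
  rw [smul_comm]
  exact Submodule.subset_span ⟨s • m, r, n, rfl⟩

noncomputable def lsmulAux (s : S) : BalancedTensor R M N →ₗ[ℤ] BalancedTensor R M N :=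
  Submodule.mapQ _ _ _ (lsmul_le R M N S s)

lemma lsmulAux_mk (s : S) (y : M ⊗[ℤ] N) :
    lsmulAux R M N S s (Submodule.Quotient.mk y) = Submodule.Quotient.mk
      (TensorProduct.map ((DistribMulAction.toAddMonoidHom M s).toIntLinearMap) LinearMap.id y) :=
  Submodule.mapQ_apply _ _ _ y

noncomputable instance instModuleLeft : Module S (BalancedTensor R M N) where
  smul s x := lsmulAux R M N S s x
  one_smul x := by
    obtain ⟨y, rfl⟩ := Submodule.Quotient.mk_surjective _ x
    show lsmulAux R M N S 1 (Submodule.Quotient.mk y) = _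
    rw [lsmulAux_mk]
    congr 1
    induction y using TensorProduct.induction_on with
    | zero => simp
    | tmul m n => simp
    | add a b ha hb => simp only [map_add, ha, hb]
  mul_smul s t x := by
    obtain ⟨y, rfl⟩ := Submodule.Quotient.mk_surjective _ x
    show lsmulAux R M N S (s * t) (Submodule.Quotient.mk y) =
      lsmulAux R M N S s (lsmulAux R M N S t (Submodule.Quotient.mk y))
    simp only [lsmulAux_mk]
    congr 1
    induction y using TensorProduct.induction_on with
    | zero => simp
    | tmul m n => simp [mul_smul]
    | add a b ha hb => simp only [map_add, ha, hb]
  smul_zero s := map_zero (lsmulAux R M N S s)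
  smul_add s x y := map_add (lsmulAux R M N S s) x y
  add_smul s t x := by
    obtain ⟨y, rfl⟩ := Submodule.Quotient.mk_surjective _ x
    show lsmulAux R M N S (s + t) (Submodule.Quotient.mk y) =
      lsmulAux R M N S s (Submodule.Quotient.mk y) + lsmulAux R M N S t (Submodule.Quotient.mk y)
    simp only [lsmulAux_mk, ← Submodule.Quotient.mk_add]
    congr 1
    induction y using TensorProduct.induction_on with
    | zero => simp
    | tmul m n => simp [add_smul, TensorProduct.add_tmul]
    | add a b ha hb =>
        simp only [map_add] at ha hb ⊢
        rw [ha, hb]; abel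
  zero_smul x := by
    obtain ⟨y, rfl⟩ := Submodule.Quotient.mk_surjective _ x
    show lsmulAux R M N S 0 (Submodule.Quotient.mk y) = 0
    rw [lsmulAux_mk, show (0 : BalancedTensor R M N) = Submodule.Quotient.mk 0 from rfl]
    congr 1
    induction y using TensorProduct.induction_on with
    | zero => simp
    | tmul m n => simp [TensorProduct.zero_tmul]
    | add a b ha hb => rw [map_add, ha, hb]; simp

lemma smul_mk (s : S) (m : M) (n : N) :
    s • (BalancedTensor.mk R M N m n) = BalancedTensor.mk R M N (s • m) n := by
  show lsmulAux R M N S s _ = _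
  rw [BalancedTensor.mk, lsmulAux_mk]
  simp [BalancedTensor.mk]; rfl
end left

section right
variable (S : Type*) [Ring S] [Module S N] [SMulCommClass S R N]

lemma rsmul_le (s : S) : balRel R M N ≤ Submodule.comap
    (TensorProduct.map LinearMap.id ((DistribMulAction.toAddMonoidHom N s).toIntLinearMap))
    (balRel R M N) := by
  refine Submodule.span_le.2 ?_
  rintro x ⟨m, r, n, rfl⟩
  simp only [SetLike.mem_coe, Submodule.mem_comap, map_sub, TensorProduct.map_tmul,
    AddMonoidHom.coe_toIntLinearMap, DistribMulAction.toAddMonoidHom_apply,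
    LinearMap.id_coe, id_eq]
  rw [smul_comm s r n]
  exact Submodule.subset_span ⟨m, r, s • n, rfl⟩

noncomputable def rsmulAux (s : S) : BalancedTensor R M N →ₗ[ℤ] BalancedTensor R M N :=
  Submodule.mapQ _ _ _ (rsmul_le R M N S s)

lemma rsmulAux_mk (s : S) (y : M ⊗[ℤ] N) :
    rsmulAux R M N S s (Submodule.Quotient.mk y) = Submodule.Quotient.mk
      (TensorProduct.map LinearMap.id ((DistribMulAction.toAddMonoidHom N s).toIntLinearMap) y) :=
  Submodule.mapQ_apply _ _ _ y

noncomputable instance instModuleRight : Module S (BalancedTensor R M N) where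
  smul s x := rsmulAux R M N S s x
  one_smul x := by
    obtain ⟨y, rfl⟩ := Submodule.Quotient.mk_surjective _ x
    show rsmulAux R M N S 1 (Submodule.Quotient.mk y) = _
    rw [rsmulAux_mk]
    congr 1
    induction y using TensorProduct.induction_on with
    | zero => simp
    | tmul m n => simp
    | add a b ha hb => simp only [map_add, ha, hb]
  mul_smul s t x := by
    obtain ⟨y, rfl⟩ := Submodule.Quotient.mk_surjective _ x
    show rsmulAux R M N S (s * t) (Submodule.Quotient.mk y) =
      rsmulAux R M N S s (rsmulAux R M N S t (Submodule.Quotient.mk y))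
    simp only [rsmulAux_mk]
    congr 1
    induction y using TensorProduct.induction_on with
    | zero => simp
    | tmul m n => simp [mul_smul]
    | add a b ha hb => simp only [map_add, ha, hb]
  smul_zero s := map_zero (rsmulAux R M N S s)
  smul_add s x y := map_add (rsmulAux R M N S s) x y
  add_smul s t x := by
    obtain ⟨y, rfl⟩ := Submodule.Quotient.mk_surjective _ x
    show rsmulAux R M N S (s + t) (Submodule.Quotient.mk y) =
      rsmulAux R M N S s (Submodule.Quotient.mk y) + rsmulAux R M N S t (Submodule.Quotient.mk y)
    simp only [rsmulAux_mk, ← Submodule.Quotient.mk_add]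
    congr 1
    induction y using TensorProduct.induction_on with
    | zero => simp
    | tmul m n => simp [add_smul, TensorProduct.tmul_add]
    | add a b ha hb =>
        simp only [map_add] at ha hb ⊢
        rw [ha, hb]; abel
  zero_smul x := by
    obtain ⟨y, rfl⟩ := Submodule.Quotient.mk_surjective _ x
    show rsmulAux R M N S 0 (Submodule.Quotient.mk y) = 0
    rw [rsmulAux_mk, show (0 : BalancedTensor R M N) = Submodule.Quotient.mk 0 from rfl]
    congr 1
    induction y using TensorProduct.induction_on with
    | zero => simp
    | tmul m n => simp [TensorProduct.tmul_zero]
    | add a b ha hb => rw [map_add, ha, hb]; simp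

lemma rsmul_mk (s : S) (m : M) (n : N) :
    (instModuleRight R M N S).toSMul.smul s (BalancedTensor.mk R M N m n)
      = BalancedTensor.mk R M N m (s • n) := by
  show rsmulAux R M N S s _ = _
  rw [BalancedTensor.mk, rsmulAux_mk]
  simp [BalancedTensor.mk]; rfl
end right

section tmap
variable {M' : Type*} [AddCommGroup M'] [Module Rᵐᵒᵖ M']
variable {N' : Type*} [AddCommGroup N'] [Module R N']

lemma tmapLeft_le (f : M →ₗ[Rᵐᵒᵖ] M') : balRel R M N ≤ Submodule.comap
    (TensorProduct.map (f.toAddMonoidHom.toIntLinearMap) LinearMap.id) (balRel R M' N) := by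
  refine Submodule.span_le.2 ?_
  rintro x ⟨m, r, n, rfl⟩
  simp only [SetLike.mem_coe, Submodule.mem_comap, map_sub, TensorProduct.map_tmul,
    AddMonoidHom.coe_toIntLinearMap, LinearMap.toAddMonoidHom_coe, LinearMap.id_coe, id_eq,
    map_smul]
  exact Submodule.subset_span ⟨f m, r, n, rfl⟩

/-- Functoriality of the balanced tensor product in the left variable. -/
noncomputable def tmapLeft (f : M →ₗ[Rᵐᵒᵖ] M') :
    BalancedTensor R M N →+ BalancedTensor R M' N :=
  (Submodule.mapQ _ _ _ (tmapLeft_le R M N f)).toAddMonoidHom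

lemma tmapLeft_mk (f : M →ₗ[Rᵐᵒᵖ] M') (m : M) (n : N) :
    tmapLeft R M N f (BalancedTensor.mk R M N m n) = BalancedTensor.mk R M' N (f m) n := by
  have h := Submodule.mapQ_apply (balRel R M N) (balRel R M' N)
    (TensorProduct.map (f.toAddMonoidHom.toIntLinearMap) LinearMap.id)
    (h := tmapLeft_le R M N f) (m ⊗ₜ[ℤ] n)
  exact h.trans (by simp [BalancedTensor.mk])

lemma tmapRight_le (f : N →ₗ[R] N') : balRel R M N ≤ Submodule.comap
    (TensorProduct.map LinearMap.id (f.toAddMonoidHom.toIntLinearMap)) (balRel R M N') := by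
  refine Submodule.span_le.2 ?_
  rintro x ⟨m, r, n, rfl⟩
  simp only [SetLike.mem_coe, Submodule.mem_comap, map_sub, TensorProduct.map_tmul,
    AddMonoidHom.coe_toIntLinearMap, LinearMap.toAddMonoidHom_coe, LinearMap.id_coe, id_eq,
    map_smul]
  exact Submodule.subset_span ⟨m, r, f n, rfl⟩

/-- Functoriality of the balanced tensor product in the right variable. -/
noncomputable def tmapRight (f : N →ₗ[R] N') :
    BalancedTensor R M N →+ BalancedTensor R M N' :=
  (Submodule.mapQ _ _ _ (tmapRight_le R M N f)).toAddMonoidHom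

lemma tmapRight_mk (f : N →ₗ[R] N') (m : M) (n : N) :
    tmapRight R M N f (BalancedTensor.mk R M N m n) = BalancedTensor.mk R M N' m (f n) := by
  have h := Submodule.mapQ_apply (balRel R M N) (balRel R M N')
    (TensorProduct.map LinearMap.id (f.toAddMonoidHom.toIntLinearMap))
    (h := tmapRight_le R M N f) (m ⊗ₜ[ℤ] n)
  exact h.trans (by simp [BalancedTensor.mk])

end tmap
end BalancedTensor
end BT
section more
open TensorProduct MulOpposite
variable (R : Type*) [Ring R]
variable (M : Type*) [AddCommGroup M] [Module Rᵐᵒᵖ M]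
variable (N : Type*) [AddCommGroup N] [Module R N]

namespace BalancedTensor

instance smulCommClass_out (S T : Type*) [Ring S] [Ring T]
    [Module S M] [SMulCommClass S Rᵐᵒᵖ M] [Module T N] [SMulCommClass T R N] :
    SMulCommClass S T (BalancedTensor R M N) := by
  constructor
  intro s t x
  obtain ⟨y, rfl⟩ := Submodule.Quotient.mk_surjective _ x
  show lsmulAux R M N S s (rsmulAux R M N T t (Submodule.Quotient.mk y)) =
    rsmulAux R M N T t (lsmulAux R M N S s (Submodule.Quotient.mk y))
  simp only [lsmulAux_mk, rsmulAux_mk]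
  congr 1
  induction y using TensorProduct.induction_on with
  | zero => simp
  | tmul m n => simp
  | add a b ha hb => simp only [map_add, ha, hb]

variable {M' : Type*} [AddCommGroup M'] [Module Rᵐᵒᵖ M']
variable {N' : Type*} [AddCommGroup N'] [Module R N']

/-- `tmapLeft`, bundled as an `S`-linear map for an outer action of `S`
on the right-hand factor. -/
noncomputable def tmapLeftE (S : Type*) [Ring S] [Module S N] [SMulCommClass S R N]
    (f : M →ₗ[Rᵐᵒᵖ] M') : BalancedTensor R M N →ₗ[S] BalancedTensor R M' N where
  toFun := tmapLeft R M N f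
  map_add' := map_add _
  map_smul' := by
    intro s x
    obtain ⟨y, rfl⟩ := Submodule.Quotient.mk_surjective _ x
    show tmapLeft R M N f (rsmulAux R M N S s (Submodule.Quotient.mk y)) =
      rsmulAux R M' N S s (tmapLeft R M N f (Submodule.Quotient.mk y))
    have h1 := Submodule.mapQ_apply (balRel R M N) (balRel R M' N)
      (TensorProduct.map (f.toAddMonoidHom.toIntLinearMap) LinearMap.id)
      (h := tmapLeft_le R M N f)
    show Submodule.mapQ _ _ (TensorProduct.map (f.toAddMonoidHom.toIntLinearMap) LinearMap.id)
        (tmapLeft_le R M N f) (rsmulAux R M N S s (Submodule.Quotient.mk y)) =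
      rsmulAux R M' N S s (Submodule.mapQ _ _
        (TensorProduct.map (f.toAddMonoidHom.toIntLinearMap) LinearMap.id)
        (tmapLeft_le R M N f) (Submodule.Quotient.mk y))
    simp only [rsmulAux_mk, h1]
    congr 1
    induction y using TensorProduct.induction_on with
    | zero => simp
    | tmul m n => simp
    | add a b ha hb => simp only [map_add, ha, hb]

/-- `tmapRight`, bundled as an `S`-linear map for an outer action of `S`
on the left-hand factor. -/
noncomputable def tmapRightE (S : Type*) [Ring S] [Module S M] [SMulCommClass S Rᵐᵒᵖ M]
    (f : N →ₗ[R] N') : BalancedTensor R M N →ₗ[S] BalancedTensor R M N' where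
  toFun := tmapRight R M N f
  map_add' := map_add _
  map_smul' := by
    intro s x
    obtain ⟨y, rfl⟩ := Submodule.Quotient.mk_surjective _ x
    show tmapRight R M N f (lsmulAux R M N S s (Submodule.Quotient.mk y)) =
      lsmulAux R M N' S s (tmapRight R M N f (Submodule.Quotient.mk y))
    have h1 := Submodule.mapQ_apply (balRel R M N) (balRel R M N')
      (TensorProduct.map LinearMap.id (f.toAddMonoidHom.toIntLinearMap))
      (h := tmapRight_le R M N f)
    show Submodule.mapQ _ _ (TensorProduct.map LinearMap.id (f.toAddMonoidHom.toIntLinearMap))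
        (tmapRight_le R M N f) (lsmulAux R M N S s (Submodule.Quotient.mk y)) =
      lsmulAux R M N' S s (Submodule.mapQ _ _
        (TensorProduct.map LinearMap.id (f.toAddMonoidHom.toIntLinearMap))
        (tmapRight_le R M N f) (Submodule.Quotient.mk y))
    simp only [lsmulAux_mk, h1]
    congr 1
    induction y using TensorProduct.induction_on with
    | zero => simp
    | tmul m n => simp
    | add a b ha hb => simp only [map_add, ha, hb]

end BalancedTensor
end more

section homology
/-- The homology of a pair of composable maps of abelian groups. -/
def homologyAt {T₁ T₂ T₃ : Type*} [AddCommGroup T₁] [AddCommGroup T₂] [AddCommGroup T₃]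
    (f : T₁ →+ T₂) (g : T₂ →+ T₃) : Type _ :=
  g.ker ⧸ (f.range.addSubgroupOf g.ker)
end homology

noncomputable instance homologyAt.instAddCommGroup {T₁ T₂ T₃ : Type*} [AddCommGroup T₁]
    [AddCommGroup T₂] [AddCommGroup T₃] (f : T₁ →+ T₂) (g : T₂ →+ T₃) :
    AddCommGroup (homologyAt f g) :=
  inferInstanceAs (AddCommGroup (g.ker ⧸ (f.range.addSubgroupOf g.ker)))
open MulOpposite

section T2def
variable (R : Type*) [Ring R]

/-- The ring of upper triangular `2 × 2` matrices over `R`, as a subring of the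
matrix ring. -/
def T2 : Subring (Matrix (Fin 2) (Fin 2) R) where
  carrier := {m | m 1 0 = 0}
  mul_mem' := by
    intro x y hx hy
    simp only [Set.mem_setOf_eq] at *
    rw [Matrix.mul_apply, Fin.sum_univ_two, hx, hy]
    simp
  one_mem' := by simp [Matrix.one_apply]
  add_mem' := by
    intro x y hx hy
    simp only [Set.mem_setOf_eq] at *
    simp [Matrix.add_apply, hx, hy]
  zero_mem' := by simp [Set.mem_setOf_eq]
  neg_mem' := by
    intro x hx
    simp only [Set.mem_setOf_eq] at *
    simp [Matrix.neg_apply, hx]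

variable {R}

/-- upper-left entry -/
def T2.c00 (s : T2 R) : R := (s : Matrix (Fin 2) (Fin 2) R) 0 0
/-- upper-right entry -/
def T2.c01 (s : T2 R) : R := (s : Matrix (Fin 2) (Fin 2) R) 0 1
/-- lower-right entry -/
def T2.c11 (s : T2 R) : R := (s : Matrix (Fin 2) (Fin 2) R) 1 1

namespace T2
lemma c00_mul (s t : T2 R) : c00 (s * t) = c00 s * c00 t := by
  show ((s * t : T2 R) : Matrix (Fin 2) (Fin 2) R) 0 0 = _
  rw [Subring.coe_mul, Matrix.mul_apply, Fin.sum_univ_two]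
  rw [show ((t : Matrix (Fin 2) (Fin 2) R) 1 0) = 0 from t.2]
  simp [c00]
lemma c01_mul (s t : T2 R) : c01 (s * t) = c00 s * c01 t + c01 s * c11 t := by
  show ((s * t : T2 R) : Matrix (Fin 2) (Fin 2) R) 0 1 = _
  rw [Subring.coe_mul, Matrix.mul_apply, Fin.sum_univ_two]
  simp [c00, c01, c11]
lemma c11_mul (s t : T2 R) : c11 (s * t) = c11 s * c11 t := by
  show ((s * t : T2 R) : Matrix (Fin 2) (Fin 2) R) 1 1 = _
  rw [Subring.coe_mul, Matrix.mul_apply, Fin.sum_univ_two]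
  rw [show ((s : Matrix (Fin 2) (Fin 2) R) 1 0) = 0 from s.2]
  simp [c11]
lemma c00_one : c00 (1 : T2 R) = 1 := by simp [c00, Matrix.one_apply]
lemma c01_one : c01 (1 : T2 R) = 0 := by simp [c01, Matrix.one_apply]
lemma c11_one : c11 (1 : T2 R) = 1 := by simp [c11, Matrix.one_apply]
lemma c00_add (s t : T2 R) : c00 (s + t) = c00 s + c00 t := rfl
lemma c01_add (s t : T2 R) : c01 (s + t) = c01 s + c01 t := rfl
lemma c11_add (s t : T2 R) : c11 (s + t) = c11 s + c11 t := rfl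
lemma c00_zero : c00 (0 : T2 R) = 0 := rfl
lemma c01_zero : c01 (0 : T2 R) = 0 := rfl
lemma c11_zero : c11 (0 : T2 R) = 0 := rfl
end T2
end T2def

section T2mod
open T2
variable (S : Type*) [Ring S]
variable (U : Type*) [AddCommGroup U] [Module S U]

/-- The upper triangular `2 × 2` matrices `[[u₁, u₂], [0, u₃]]` with entries in a
bimodule `U`, encoded as triples. -/
abbrev T2Mod (U : Type*) : Type _ := U × U × U

/-- Left multiplication of upper triangular matrices over `S` on upper triangular
matrices with entries in the `(S,T)`-bimodule `U`. -/
noncomputable instance T2Mod.moduleLeft : Module (T2 S) (T2Mod U) where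
  smul s u := (c00 s • u.1, c00 s • u.2.1 + c01 s • u.2.2, c11 s • u.2.2)
  one_smul u := by
    show (c00 (1 : T2 S) • u.1, c00 (1 : T2 S) • u.2.1 + c01 (1 : T2 S) • u.2.2,
      c11 (1 : T2 S) • u.2.2) = u
    rw [c00_one, c01_one, c11_one]
    simp
  mul_smul s t u := by
    show (c00 (s * t) • u.1, c00 (s * t) • u.2.1 + c01 (s * t) • u.2.2,
        c11 (s * t) • u.2.2) =
      (c00 s • (c00 t • u.1), c00 s • (c00 t • u.2.1 + c01 t • u.2.2)
        + c01 s • (c11 t • u.2.2), c11 s • (c11 t • u.2.2))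
    rw [c00_mul, c01_mul, c11_mul]
    refine Prod.ext ?_ (Prod.ext ?_ ?_) <;>
      simp [mul_smul, add_smul, smul_add, add_assoc]
  smul_zero s := by
    show (c00 s • (0 : U), c00 s • (0 : U) + c01 s • (0 : U), c11 s • (0 : U)) = 0
    simp
  smul_add s u v := by
    show (c00 s • (u.1 + v.1), c00 s • (u.2.1 + v.2.1) + c01 s • (u.2.2 + v.2.2),
        c11 s • (u.2.2 + v.2.2)) =
      ((c00 s • u.1, c00 s • u.2.1 + c01 s • u.2.2, c11 s • u.2.2) +
        (c00 s • v.1, c00 s • v.2.1 + c01 s • v.2.2, c11 s • v.2.2))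
    refine Prod.ext ?_ (Prod.ext ?_ ?_) <;> simp [smul_add] <;> abel
  add_smul s t u := by
    show (c00 (s + t) • u.1, c00 (s + t) • u.2.1 + c01 (s + t) • u.2.2,
        c11 (s + t) • u.2.2) =
      ((c00 s • u.1, c00 s • u.2.1 + c01 s • u.2.2, c11 s • u.2.2) +
        (c00 t • u.1, c00 t • u.2.1 + c01 t • u.2.2, c11 t • u.2.2))
    rw [c00_add, c01_add, c11_add]
    refine Prod.ext ?_ (Prod.ext ?_ ?_) <;> simp [add_smul] <;> abel
  zero_smul u := by
    show (c00 (0 : T2 S) • u.1, c00 (0 : T2 S) • u.2.1 + c01 (0 : T2 S) • u.2.2,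
      c11 (0 : T2 S) • u.2.2) = 0
    rw [c00_zero, c01_zero, c11_zero]
    simp
end T2mod
section T2modR
open T2
variable (T : Type*) [Ring T]
variable (U : Type*) [AddCommGroup U] [Module Tᵐᵒᵖ U]

/-- Right multiplication of upper triangular matrices over `T` on upper triangular
matrices with entries in the `(S,T)`-bimodule `U`. -/
noncomputable instance T2Mod.moduleRight : Module (T2 T)ᵐᵒᵖ (T2Mod U) where
  smul p u := ((op (c00 p.unop) : Tᵐᵒᵖ) • u.1,
    (op (c01 p.unop) : Tᵐᵒᵖ) • u.1 + (op (c11 p.unop) : Tᵐᵒᵖ) • u.2.1,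
    (op (c11 p.unop) : Tᵐᵒᵖ) • u.2.2)
  one_smul u := by
    show ((op (c00 (1 : T2 T)) : Tᵐᵒᵖ) • u.1,
      (op (c01 (1 : T2 T)) : Tᵐᵒᵖ) • u.1 + (op (c11 (1 : T2 T)) : Tᵐᵒᵖ) • u.2.1,
      (op (c11 (1 : T2 T)) : Tᵐᵒᵖ) • u.2.2) = u
    rw [c00_one, c01_one, c11_one]
    simp
  mul_smul p q u := by
    show ((op (c00 ((p * q).unop)) : Tᵐᵒᵖ) • u.1,
        (op (c01 ((p * q).unop)) : Tᵐᵒᵖ) • u.1 + (op (c11 ((p * q).unop)) : Tᵐᵒᵖ) • u.2.1,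
        (op (c11 ((p * q).unop)) : Tᵐᵒᵖ) • u.2.2) =
      ((op (c00 p.unop) : Tᵐᵒᵖ) • ((op (c00 q.unop) : Tᵐᵒᵖ) • u.1),
        (op (c01 p.unop) : Tᵐᵒᵖ) • ((op (c00 q.unop) : Tᵐᵒᵖ) • u.1) +
          (op (c11 p.unop) : Tᵐᵒᵖ) • ((op (c01 q.unop) : Tᵐᵒᵖ) • u.1 +
            (op (c11 q.unop) : Tᵐᵒᵖ) • u.2.1),
        (op (c11 p.unop) : Tᵐᵒᵖ) • ((op (c11 q.unop) : Tᵐᵒᵖ) • u.2.2))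
    rw [MulOpposite.unop_mul, c00_mul, c01_mul, c11_mul]
    refine Prod.ext ?_ (Prod.ext ?_ ?_) <;>
      simp [MulOpposite.op_mul, MulOpposite.op_add, mul_smul, add_smul, smul_add, add_assoc]
  smul_zero p := by
    show ((op (c00 p.unop) : Tᵐᵒᵖ) • (0 : U),
      (op (c01 p.unop) : Tᵐᵒᵖ) • (0 : U) + (op (c11 p.unop) : Tᵐᵒᵖ) • (0 : U),
      (op (c11 p.unop) : Tᵐᵒᵖ) • (0 : U)) = 0
    simp
  smul_add p u v := by
    show ((op (c00 p.unop) : Tᵐᵒᵖ) • (u.1 + v.1),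
        (op (c01 p.unop) : Tᵐᵒᵖ) • (u.1 + v.1) + (op (c11 p.unop) : Tᵐᵒᵖ) • (u.2.1 + v.2.1),
        (op (c11 p.unop) : Tᵐᵒᵖ) • (u.2.2 + v.2.2)) =
      (((op (c00 p.unop) : Tᵐᵒᵖ) • u.1,
        (op (c01 p.unop) : Tᵐᵒᵖ) • u.1 + (op (c11 p.unop) : Tᵐᵒᵖ) • u.2.1,
        (op (c11 p.unop) : Tᵐᵒᵖ) • u.2.2) +
       ((op (c00 p.unop) : Tᵐᵒᵖ) • v.1,
        (op (c01 p.unop) : Tᵐᵒᵖ) • v.1 + (op (c11 p.unop) : Tᵐᵒᵖ) • v.2.1,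
        (op (c11 p.unop) : Tᵐᵒᵖ) • v.2.2))
    refine Prod.ext ?_ (Prod.ext ?_ ?_) <;> simp [smul_add] <;> abel
  add_smul p q u := by
    show ((op (c00 ((p + q).unop)) : Tᵐᵒᵖ) • u.1,
        (op (c01 ((p + q).unop)) : Tᵐᵒᵖ) • u.1 + (op (c11 ((p + q).unop)) : Tᵐᵒᵖ) • u.2.1,
        (op (c11 ((p + q).unop)) : Tᵐᵒᵖ) • u.2.2) =
      (((op (c00 p.unop) : Tᵐᵒᵖ) • u.1,
        (op (c01 p.unop) : Tᵐᵒᵖ) • u.1 + (op (c11 p.unop) : Tᵐᵒᵖ) • u.2.1,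
        (op (c11 p.unop) : Tᵐᵒᵖ) • u.2.2) +
       ((op (c00 q.unop) : Tᵐᵒᵖ) • u.1,
        (op (c01 q.unop) : Tᵐᵒᵖ) • u.1 + (op (c11 q.unop) : Tᵐᵒᵖ) • u.2.1,
        (op (c11 q.unop) : Tᵐᵒᵖ) • u.2.2))
    rw [MulOpposite.unop_add, c00_add, c01_add, c11_add]
    refine Prod.ext ?_ (Prod.ext ?_ ?_) <;>
      simp [MulOpposite.op_add, add_smul] <;> abel
  zero_smul u := by
    show ((op (c00 (0 : T2 T)) : Tᵐᵒᵖ) • u.1,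
      (op (c01 (0 : T2 T)) : Tᵐᵒᵖ) • u.1 + (op (c11 (0 : T2 T)) : Tᵐᵒᵖ) • u.2.1,
      (op (c11 (0 : T2 T)) : Tᵐᵒᵖ) • u.2.2) = 0
    rw [c00_zero, c01_zero, c11_zero]
    simp

end T2modR
section T2modC
open T2
variable (S T : Type*) [Ring S] [Ring T]
variable (U : Type*) [AddCommGroup U] [Module S U] [Module Tᵐᵒᵖ U] [SMulCommClass S Tᵐᵒᵖ U]

noncomputable instance T2Mod.smulCommClass : SMulCommClass (T2 S) (T2 T)ᵐᵒᵖ (T2Mod U) := by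
  constructor
  intro s p u
  show (c00 s • ((op (c00 p.unop) : Tᵐᵒᵖ) • u.1),
      c00 s • ((op (c01 p.unop) : Tᵐᵒᵖ) • u.1 + (op (c11 p.unop) : Tᵐᵒᵖ) • u.2.1) +
        c01 s • ((op (c11 p.unop) : Tᵐᵒᵖ) • u.2.2),
      c11 s • ((op (c11 p.unop) : Tᵐᵒᵖ) • u.2.2)) =
    ((op (c00 p.unop) : Tᵐᵒᵖ) • (c00 s • u.1),
      (op (c01 p.unop) : Tᵐᵒᵖ) • (c00 s • u.1) +
        (op (c11 p.unop) : Tᵐᵒᵖ) • (c00 s • u.2.1 + c01 s • u.2.2),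
      (op (c11 p.unop) : Tᵐᵒᵖ) • (c11 s • u.2.2))
  refine Prod.ext ?_ (Prod.ext ?_ ?_) <;>
    simp [smul_comm, smul_add] <;> abel

noncomputable instance T2Mod.smulCommClass' : SMulCommClass (T2 T)ᵐᵒᵖ (T2 S) (T2Mod U) :=
  SMulCommClass.symm _ _ _
end T2modC

open MulOpposite
universe u

section TriangularAux
open T2

/-! ### `T2` entry constructors -/

section t2mk
variable {R : Type*} [Ring R]

/-- Build an element of `T2 R` from its three entries. -/
noncomputable def t2mk (a b c : R) : T2 R :=
  ⟨!![a, b; 0, c], by show (!![a, b; 0, c] : Matrix (Fin 2) (Fin 2) R) 1 0 = 0; simp⟩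

@[simp] lemma t2mk_c00 (a b c : R) : c00 (t2mk a b c) = a := by
  show (!![a, b; 0, c] : Matrix (Fin 2) (Fin 2) R) 0 0 = a; simp
@[simp] lemma t2mk_c01 (a b c : R) : c01 (t2mk a b c) = b := by
  show (!![a, b; 0, c] : Matrix (Fin 2) (Fin 2) R) 0 1 = b; simp
@[simp] lemma t2mk_c11 (a b c : R) : c11 (t2mk a b c) = c := by
  show (!![a, b; 0, c] : Matrix (Fin 2) (Fin 2) R) 1 1 = c; simp

lemma t2ext {s t : T2 R} (h00 : c00 s = c00 t) (h01 : c01 s = c01 t) (h11 : c11 s = c11 t) :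
    s = t := by
  apply Subtype.ext
  ext i j
  fin_cases i <;> fin_cases j
  · exact h00
  · exact h01
  · exact s.2.trans t.2.symm
  · exact h11

lemma t2mk_eta (s : T2 R) : t2mk (c00 s) (c01 s) (c11 s) = s :=
  t2ext (by simp) (by simp) (by simp)

lemma t2mk_mul (a b c a' b' c' : R) :
    t2mk a b c * t2mk a' b' c' = t2mk (a * a') (a * b' + b * c') (c * c') :=
  t2ext (by simp [c00_mul]) (by simp [c01_mul]) (by simp [c11_mul])

lemma t2mk_add (a b c a' b' c' : R) :
    t2mk a b c + t2mk a' b' c' = t2mk (a + a') (b + b') (c + c') :=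
  t2ext (by simp [c00_add]) (by simp [c01_add]) (by simp [c11_add])
end t2mk

/-! ### unfolding lemmas for the `T2Mod` actions -/

section smuldef
variable {S T U : Type*} [Ring S] [Ring T] [AddCommGroup U]

lemma T2Mod.lsmul_def [Module S U] (s : T2 S) (u : T2Mod U) :
    s • u = (c00 s • u.1, c00 s • u.2.1 + c01 s • u.2.2, c11 s • u.2.2) := rfl

lemma T2Mod.rsmul_def [Module Tᵐᵒᵖ U] (p : (T2 T)ᵐᵒᵖ) (u : T2Mod U) :
    p • u = ((op (c00 p.unop) : Tᵐᵒᵖ) • u.1,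
      (op (c01 p.unop) : Tᵐᵒᵖ) • u.1 + (op (c11 p.unop) : Tᵐᵒᵖ) • u.2.1,
      (op (c11 p.unop) : Tᵐᵒᵖ) • u.2.2) := rfl
end smuldef

/-! ### basic lemmas on `BalancedTensor.mk` -/

namespace BalancedTensor
variable (R : Type*) [Ring R] (M : Type*) [AddCommGroup M] [Module Rᵐᵒᵖ M]
  (N : Type*) [AddCommGroup N] [Module R N]

lemma mk_add_left (m m' : M) (n : N) :
    mk R M N (m + m') n = mk R M N m n + mk R M N m' n := by
  show Submodule.Quotient.mk _ = _
  rw [TensorProduct.add_tmul, Submodule.Quotient.mk_add]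
  rfl

lemma mk_add_right (m : M) (n n' : N) :
    mk R M N m (n + n') = mk R M N m n + mk R M N m n' := by
  show Submodule.Quotient.mk _ = _
  rw [TensorProduct.tmul_add, Submodule.Quotient.mk_add]
  rfl

@[simp] lemma mk_zero_left (n : N) : mk R M N 0 n = 0 := by
  show Submodule.Quotient.mk _ = _
  rw [TensorProduct.zero_tmul, Submodule.Quotient.mk_zero]; rfl

@[simp] lemma mk_zero_right (m : M) : mk R M N m 0 = 0 := by
  show Submodule.Quotient.mk _ = _
  rw [TensorProduct.tmul_zero, Submodule.Quotient.mk_zero]; rfl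

lemma mk_rel (r : R) (m : M) (n : N) :
    mk R M N ((op r : Rᵐᵒᵖ) • m) n = mk R M N m (r • n) := by
  show Submodule.Quotient.mk _ = Submodule.Quotient.mk _
  rw [Submodule.Quotient.eq]
  exact Submodule.subset_span ⟨m, r, n, rfl⟩

lemma qmk_zero : @Eq (BalancedTensor R M N) (Submodule.Quotient.mk 0) 0 :=
  Submodule.Quotient.mk_zero _

lemma qmk_add (a b : M ⊗[ℤ] N) : @Eq (BalancedTensor R M N) (Submodule.Quotient.mk (a + b))
    (@HAdd.hAdd (BalancedTensor R M N) (BalancedTensor R M N) (BalancedTensor R M N) _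
      (Submodule.Quotient.mk a) (Submodule.Quotient.mk b)) :=
  Submodule.Quotient.mk_add _

lemma rsmul_mk'' (S : Type*) [Ring S] [Module S N] [SMulCommClass S R N] (s : S) (m : M) (n : N) :
    s • (mk R M N m n) = mk R M N m (s • n) :=
  rsmul_mk R M N S s m n

end BalancedTensor

/-! ### The entrywise decomposition of the triangular balanced tensor product -/

section TriMain
open BalancedTensor

variable (B : Type*) [Ring B]
variable (M : Type*) [AddCommGroup M] [Module Bᵐᵒᵖ M]
variable (N : Type*) [AddCommGroup N] [Module B N]

/-- The bilinear map underlying the entrywise decomposition. -/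
noncomputable def triPhiBil : T2Mod M →+ T2Mod N →+ T2Mod (BalancedTensor B M N) :=
  AddMonoidHom.mk' (fun m => AddMonoidHom.mk'
    (fun n => (mk B M N m.1 n.1,
      mk B M N m.1 n.2.1 + mk B M N m.2.1 n.2.2, mk B M N m.2.2 n.2.2))
    (fun n n' => by
      refine Prod.ext ?_ (Prod.ext ?_ ?_) <;>
        simp [mk_add_right] <;> abel))
  (fun m m' => by
    ext n <;>
      simp [AddMonoidHom.mk'_apply, AddMonoidHom.add_apply, mk_add_left] <;> try abel)

@[simp] lemma triPhiBil_apply (m : T2Mod M) (n : T2Mod N) :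
    triPhiBil B M N m n = (mk B M N m.1 n.1,
      mk B M N m.1 n.2.1 + mk B M N m.2.1 n.2.2, mk B M N m.2.2 n.2.2) := rfl

/-- The decomposition map on the big balanced tensor product. -/
noncomputable def triPhi :
    BalancedTensor (T2 B) (T2Mod M) (T2Mod N) →+ T2Mod (BalancedTensor B M N) :=
  QuotientAddGroup.lift (balRel (T2 B) (T2Mod M) (T2Mod N)).toAddSubgroup
    (TensorProduct.liftAddHom (triPhiBil B M N) (fun r m n => by
      induction r using Int.induction_on with
      | zero => simp; rfl
      | succ k ih => simp only [add_smul, one_smul, map_add, AddMonoidHom.add_apply, ih]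
      | pred k ih => simp only [sub_smul, one_smul, map_sub, AddMonoidHom.sub_apply, ih]))
    (by
      intro x hx
      rw [AddMonoidHom.mem_ker]
      rw [Submodule.mem_toAddSubgroup] at hx
      replace hx : x ∈ Submodule.span ℤ _ := hx
      induction hx using Submodule.span_induction with
      | mem y hy =>
          obtain ⟨m, r, n, rfl⟩ := hy
          rw [map_sub, TensorProduct.liftAddHom_tmul, TensorProduct.liftAddHom_tmul, sub_eq_zero,
            triPhiBil_apply, triPhiBil_apply, T2Mod.rsmul_def, T2Mod.lsmul_def]
          refine Prod.ext ?_ (Prod.ext ?_ ?_) <;>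
            simp [mk_rel, mk_add_left, mk_add_right] <;> try abel
      | zero => rw [map_zero]
      | add a b ha hb iha ihb => rw [map_add, iha, ihb, add_zero]
      | smul r y hy ihy =>
          induction r using Int.induction_on with
          | zero => rw [zero_smul, map_zero]
          | succ k ih => rw [add_smul, one_smul, map_add, ih, ihy, add_zero]
          | pred k ih => rw [sub_smul, one_smul, map_sub, ih, ihy, sub_zero])

lemma triPhi_mk (m : T2Mod M) (n : T2Mod N) :
    triPhi B M N (BalancedTensor.mk (T2 B) (T2Mod M) (T2Mod N) m n) = triPhiBil B M N m n :=
  rfl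

/-- One inverse entry map: `t ↦ [[eM m ⊗ eN n]]` summed over the entry placements. -/
noncomputable def triPsiBil (eM : M →+ T2Mod M) (eN : N →+ T2Mod N) :
    M →+ N →+ BalancedTensor (T2 B) (T2Mod M) (T2Mod N) :=
  AddMonoidHom.mk' (fun m => AddMonoidHom.mk'
    (fun n => BalancedTensor.mk (T2 B) (T2Mod M) (T2Mod N) (eM m) (eN n))
    (fun n n' => by simp only [map_add, mk_add_right]))
  (fun m m' => by
    ext n
    simp only [AddMonoidHom.mk'_apply, AddMonoidHom.add_apply, map_add, mk_add_left])

noncomputable def triPsiAux (eM : M →+ T2Mod M) (eN : N →+ T2Mod N)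
    (h : ∀ (b : B) (m : M) (n : N),
      BalancedTensor.mk (T2 B) (T2Mod M) (T2Mod N) (eM ((op b : Bᵐᵒᵖ) • m)) (eN n)
        = BalancedTensor.mk (T2 B) (T2Mod M) (T2Mod N) (eM m) (eN (b • n))) :
    BalancedTensor B M N →+ BalancedTensor (T2 B) (T2Mod M) (T2Mod N) :=
  QuotientAddGroup.lift (balRel B M N).toAddSubgroup
    (TensorProduct.liftAddHom (triPsiBil B M N eM eN) (fun r m n => by
      induction r using Int.induction_on with
      | zero => simp
      | succ k ih => simp only [add_smul, one_smul, map_add, AddMonoidHom.add_apply, ih]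
      | pred k ih => simp only [sub_smul, one_smul, map_sub, AddMonoidHom.sub_apply, ih]))
    (by
      intro x hx
      rw [AddMonoidHom.mem_ker]
      rw [Submodule.mem_toAddSubgroup] at hx
      replace hx : x ∈ Submodule.span ℤ _ := hx
      induction hx using Submodule.span_induction with
      | mem y hy =>
          obtain ⟨m, r, n, rfl⟩ := hy
          rw [map_sub, TensorProduct.liftAddHom_tmul, TensorProduct.liftAddHom_tmul, sub_eq_zero]
          exact h r m n
      | zero => rw [map_zero]
      | add a b ha hb iha ihb => rw [map_add, iha, ihb, add_zero]
      | smul r y hy ihy =>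
          induction r using Int.induction_on with
          | zero => rw [zero_smul, map_zero]
          | succ k ih => rw [add_smul, one_smul, map_add, ih, ihy, add_zero]
          | pred k ih => rw [sub_smul, one_smul, map_sub, ih, ihy, sub_zero])

lemma triPsiAux_mk (eM : M →+ T2Mod M) (eN : N →+ T2Mod N) (h) (m : M) (n : N) :
    triPsiAux B M N eM eN h (BalancedTensor.mk B M N m n)
      = BalancedTensor.mk (T2 B) (T2Mod M) (T2Mod N) (eM m) (eN n) := rfl

/-- additive embeddings into the entries of a triangular matrix -/
noncomputable def emb1 (U : Type*) [AddCommGroup U] : U →+ T2Mod U :=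
  AddMonoidHom.mk' (fun u => (u, 0, 0)) (fun a b => by simp [Prod.ext_iff])
noncomputable def emb2 (U : Type*) [AddCommGroup U] : U →+ T2Mod U :=
  AddMonoidHom.mk' (fun u => (0, u, 0)) (fun a b => by simp [Prod.ext_iff])
noncomputable def emb3 (U : Type*) [AddCommGroup U] : U →+ T2Mod U :=
  AddMonoidHom.mk' (fun u => (0, 0, u)) (fun a b => by simp [Prod.ext_iff])

@[simp] lemma emb1_apply {U : Type*} [AddCommGroup U] (u : U) : emb1 U u = (u, 0, 0) := rfl
@[simp] lemma emb2_apply {U : Type*} [AddCommGroup U] (u : U) : emb2 U u = (0, u, 0) := rfl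
@[simp] lemma emb3_apply {U : Type*} [AddCommGroup U] (u : U) : emb3 U u = (0, 0, u) := rfl

noncomputable def triPsi1 : BalancedTensor B M N →+ BalancedTensor (T2 B) (T2Mod M) (T2Mod N) :=
  triPsiAux B M N (emb1 M) (emb1 N) (by
    intro b m n
    have hu : (emb1 M) ((op b : Bᵐᵒᵖ) • m)
        = (op (t2mk b 0 b) : (T2 B)ᵐᵒᵖ) • ((m, 0, 0) : T2Mod M) := by
      rw [T2Mod.rsmul_def]; simp
    rw [hu, mk_rel]
    congr 1
    rw [T2Mod.lsmul_def]; simp)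

noncomputable def triPsi2 : BalancedTensor B M N →+ BalancedTensor (T2 B) (T2Mod M) (T2Mod N) :=
  triPsiAux B M N (emb1 M) (emb2 N) (by
    intro b m n
    have hu : (emb1 M) ((op b : Bᵐᵒᵖ) • m)
        = (op (t2mk b 0 b) : (T2 B)ᵐᵒᵖ) • ((m, 0, 0) : T2Mod M) := by
      rw [T2Mod.rsmul_def]; simp
    rw [hu, mk_rel]
    congr 1
    rw [T2Mod.lsmul_def]; simp)

noncomputable def triPsi3 : BalancedTensor B M N →+ BalancedTensor (T2 B) (T2Mod M) (T2Mod N) :=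
  triPsiAux B M N (emb3 M) (emb3 N) (by
    intro b m n
    have hu : (emb3 M) ((op b : Bᵐᵒᵖ) • m)
        = (op (t2mk b 0 b) : (T2 B)ᵐᵒᵖ) • ((0, 0, m) : T2Mod M) := by
      rw [T2Mod.rsmul_def]; simp
    rw [hu, mk_rel]
    congr 1
    rw [T2Mod.lsmul_def]; simp)

noncomputable def triPsi :
    T2Mod (BalancedTensor B M N) →+ BalancedTensor (T2 B) (T2Mod M) (T2Mod N) :=
  AddMonoidHom.mk' (fun u => triPsi1 B M N u.1 + triPsi2 B M N u.2.1 + triPsi3 B M N u.2.2)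
    (fun u v => by
      simp only [Prod.fst_add, Prod.snd_add, map_add]
      abel)

lemma triPhi_psi1 (t : BalancedTensor B M N) :
    triPhi B M N (triPsi1 B M N t) = (t, 0, 0) := by
  obtain ⟨y, rfl⟩ := Submodule.Quotient.mk_surjective _ t
  induction y using TensorProduct.induction_on with
  | zero =>
      rw [BalancedTensor.qmk_zero, map_zero, map_zero]
      rfl
  | tmul m n =>
      show triPhi B M N (triPsi1 B M N (BalancedTensor.mk B M N m n)) = _
      rw [triPsi1, triPsiAux_mk, triPhi_mk, triPhiBil_apply]
      refine Prod.ext ?_ (Prod.ext ?_ ?_) <;> simp <;> rfl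
  | add a b ha hb =>
      rw [BalancedTensor.qmk_add]; erw [map_add, map_add, ha, hb]
      refine Prod.ext ?_ (Prod.ext ?_ ?_) <;> simp

lemma triPhi_psi2 (t : BalancedTensor B M N) :
    triPhi B M N (triPsi2 B M N t) = (0, t, 0) := by
  obtain ⟨y, rfl⟩ := Submodule.Quotient.mk_surjective _ t
  induction y using TensorProduct.induction_on with
  | zero =>
      rw [BalancedTensor.qmk_zero, map_zero, map_zero]
      rfl
  | tmul m n =>
      show triPhi B M N (triPsi2 B M N (BalancedTensor.mk B M N m n)) = _
      rw [triPsi2, triPsiAux_mk, triPhi_mk, triPhiBil_apply]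
      refine Prod.ext ?_ (Prod.ext ?_ ?_) <;> simp <;> rfl
  | add a b ha hb =>
      rw [BalancedTensor.qmk_add]; erw [map_add, map_add, ha, hb]
      refine Prod.ext ?_ (Prod.ext ?_ ?_) <;> simp

lemma triPhi_psi3 (t : BalancedTensor B M N) :
    triPhi B M N (triPsi3 B M N t) = (0, 0, t) := by
  obtain ⟨y, rfl⟩ := Submodule.Quotient.mk_surjective _ t
  induction y using TensorProduct.induction_on with
  | zero =>
      rw [BalancedTensor.qmk_zero, map_zero, map_zero]
      rfl
  | tmul m n =>
      show triPhi B M N (triPsi3 B M N (BalancedTensor.mk B M N m n)) = _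
      rw [triPsi3, triPsiAux_mk, triPhi_mk, triPhiBil_apply]
      refine Prod.ext ?_ (Prod.ext ?_ ?_) <;> simp <;> rfl
  | add a b ha hb =>
      rw [BalancedTensor.qmk_add]; erw [map_add, map_add, ha, hb]
      refine Prod.ext ?_ (Prod.ext ?_ ?_) <;> simp

lemma triPhi_triPsi (u : T2Mod (BalancedTensor B M N)) :
    triPhi B M N (triPsi B M N u) = u := by
  show triPhi B M N (triPsi1 B M N u.1 + triPsi2 B M N u.2.1 + triPsi3 B M N u.2.2) = u
  rw [map_add, map_add, triPhi_psi1, triPhi_psi2, triPhi_psi3]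
  refine Prod.ext ?_ (Prod.ext ?_ ?_) <;> simp

lemma triPsi_triPhi (t : BalancedTensor (T2 B) (T2Mod M) (T2Mod N)) :
    triPsi B M N (triPhi B M N t) = t := by
  obtain ⟨y, rfl⟩ := Submodule.Quotient.mk_surjective _ t
  induction y using TensorProduct.induction_on with
  | zero => rw [BalancedTensor.qmk_zero, map_zero, map_zero]
  | tmul m n =>
      obtain ⟨m1, m2, m3⟩ := m
      obtain ⟨n1, n2, n3⟩ := n
      show triPsi B M N (triPhi B M N
        (BalancedTensor.mk (T2 B) (T2Mod M) (T2Mod N) (m1, m2, m3) (n1, n2, n3)))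
        = BalancedTensor.mk (T2 B) (T2Mod M) (T2Mod N) (m1, m2, m3) (n1, n2, n3)
      rw [triPhi_mk, triPhiBil_apply]
      show triPsi1 B M N (mk B M N m1 n1) + triPsi2 B M N (mk B M N m1 n2 + mk B M N m2 n3)
        + triPsi3 B M N (mk B M N m3 n3) = _
      rw [map_add, triPsi1, triPsi2, triPsi3, triPsiAux_mk, triPsiAux_mk, triPsiAux_mk,
        triPsiAux_mk]
      simp only [emb1_apply, emb2_apply, emb3_apply]
      have key : ∀ (β : T2 B) (u : T2Mod M) (v : T2Mod N),
          BalancedTensor.mk (T2 B) (T2Mod M) (T2Mod N) ((op β : (T2 B)ᵐᵒᵖ) • u) v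
            = BalancedTensor.mk (T2 B) (T2Mod M) (T2Mod N) u (β • v) :=
        fun β u v => mk_rel (T2 B) (T2Mod M) (T2Mod N) β u v
      have s0 : BalancedTensor.mk (T2 B) (T2Mod M) (T2Mod N) (m1, m2, m3) (n1, n2, n3)
          = BalancedTensor.mk (T2 B) (T2Mod M) (T2Mod N) (m1, 0, 0) (n1, n2, n3)
            + BalancedTensor.mk (T2 B) (T2Mod M) (T2Mod N) (0, m2, 0) (n1, n2, n3)
            + BalancedTensor.mk (T2 B) (T2Mod M) (T2Mod N) (0, 0, m3) (n1, n2, n3) := by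
        have hm : ((m1, m2, m3) : T2Mod M)
            = ((m1, 0, 0) : T2Mod M) + (0, m2, 0) + (0, 0, m3) := by
          simp [Prod.ext_iff]
        rw [hm, mk_add_left, mk_add_left]
      have s1 : BalancedTensor.mk (T2 B) (T2Mod M) (T2Mod N) (m1, 0, 0) (n1, n2, n3)
          = BalancedTensor.mk (T2 B) (T2Mod M) (T2Mod N) (m1, 0, 0) (n1, 0, 0)
            + BalancedTensor.mk (T2 B) (T2Mod M) (T2Mod N) (m1, 0, 0) (0, n2, 0) := by
        have h := key (t2mk 1 0 0) ((m1, 0, 0) : T2Mod M) ((n1, n2, n3) : T2Mod N)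
        rw [T2Mod.rsmul_def, T2Mod.lsmul_def] at h
        simp only [unop_op, t2mk_c00, t2mk_c01, t2mk_c11, op_one, one_smul, op_zero, zero_smul,
          smul_zero, add_zero, zero_add] at h
        rw [h]
        have hn : ((n1, n2, 0) : T2Mod N) = ((n1, 0, 0) : T2Mod N) + (0, n2, 0) := by
          simp [Prod.ext_iff]
        rw [show ((n1, n2, (0 : N)) : T2Mod N) = ((n1, 0, 0) : T2Mod N) + (0, n2, 0) from hn,
          mk_add_right]
      have s2 : BalancedTensor.mk (T2 B) (T2Mod M) (T2Mod N) (0, m2, 0) (n1, n2, n3)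
          = BalancedTensor.mk (T2 B) (T2Mod M) (T2Mod N) (0, m2, 0) (0, 0, n3) := by
        have h := key (t2mk 0 0 1) ((0, m2, 0) : T2Mod M) ((n1, n2, n3) : T2Mod N)
        rw [T2Mod.rsmul_def, T2Mod.lsmul_def] at h
        simpa using h
      have s3 : BalancedTensor.mk (T2 B) (T2Mod M) (T2Mod N) (0, m2, 0) (0, 0, n3)
          = BalancedTensor.mk (T2 B) (T2Mod M) (T2Mod N) (m2, 0, 0) (0, n3, 0) := by
        have h := key (t2mk 0 1 0) ((m2, 0, 0) : T2Mod M) ((0, 0, n3) : T2Mod N)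
        rw [T2Mod.rsmul_def, T2Mod.lsmul_def] at h
        simpa using h
      have s4 : BalancedTensor.mk (T2 B) (T2Mod M) (T2Mod N) (0, 0, m3) (n1, n2, n3)
          = BalancedTensor.mk (T2 B) (T2Mod M) (T2Mod N) (0, 0, m3) (0, 0, n3) := by
        have h := key (t2mk 0 0 1) ((0, 0, m3) : T2Mod M) ((n1, n2, n3) : T2Mod N)
        rw [T2Mod.rsmul_def, T2Mod.lsmul_def] at h
        simpa using h
      rw [s0, s1, s2, s3, s4]
      abel
  | add a b ha hb =>
      rw [BalancedTensor.qmk_add]; erw [map_add, map_add, ha, hb]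

end TriMain

/-! ### equivariance of `triPhi` -/

section TriEquiv
open BalancedTensor

variable (A B : Type*) [Ring A] [Ring B]
variable (M : Type*) [AddCommGroup M] [Module A M] [Module Bᵐᵒᵖ M]
variable [SMulCommClass A Bᵐᵒᵖ M] [SMulCommClass Bᵐᵒᵖ A M]
variable (N : Type*) [AddCommGroup N] [Module B N] [Module Aᵐᵒᵖ N]
variable [SMulCommClass B Aᵐᵒᵖ N] [SMulCommClass Aᵐᵒᵖ B N]

lemma triPhi_lsmul (s : T2 A) (t : BalancedTensor (T2 B) (T2Mod M) (T2Mod N)) :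
    triPhi B M N (s • t) = s • triPhi B M N t := by
  obtain ⟨y, rfl⟩ := Submodule.Quotient.mk_surjective _ t
  induction y using TensorProduct.induction_on with
  | zero => rw [BalancedTensor.qmk_zero, smul_zero, map_zero, smul_zero]
  | tmul m n =>
      show triPhi B M N (s • BalancedTensor.mk (T2 B) (T2Mod M) (T2Mod N) m n)
        = s • triPhi B M N (BalancedTensor.mk (T2 B) (T2Mod M) (T2Mod N) m n)
      rw [BalancedTensor.smul_mk (T2 B) (T2Mod M) (T2Mod N) (T2 A), triPhi_mk, triPhi_mk,
        triPhiBil_apply, triPhiBil_apply, T2Mod.lsmul_def s m, T2Mod.lsmul_def s]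
      refine Prod.ext ?_ (Prod.ext ?_ ?_) <;>
        simp [BalancedTensor.smul_mk, mk_add_left, smul_add] <;> abel
  | add a b ha hb =>
      rw [BalancedTensor.qmk_add]; erw [smul_add, map_add, ha, hb, map_add, smul_add]

lemma triPhi_rsmul (s : (T2 A)ᵐᵒᵖ) (t : BalancedTensor (T2 B) (T2Mod M) (T2Mod N)) :
    triPhi B M N (s • t) = s • triPhi B M N t := by
  obtain ⟨y, rfl⟩ := Submodule.Quotient.mk_surjective _ t
  induction y using TensorProduct.induction_on with
  | zero => rw [BalancedTensor.qmk_zero, smul_zero, map_zero, smul_zero]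
  | tmul m n =>
      show triPhi B M N (s • BalancedTensor.mk (T2 B) (T2Mod M) (T2Mod N) m n)
        = s • triPhi B M N (BalancedTensor.mk (T2 B) (T2Mod M) (T2Mod N) m n)
      rw [BalancedTensor.rsmul_mk'' (T2 B) (T2Mod M) (T2Mod N) ((T2 A)ᵐᵒᵖ), triPhi_mk, triPhi_mk,
        triPhiBil_apply, triPhiBil_apply, T2Mod.rsmul_def s n, T2Mod.rsmul_def s]
      refine Prod.ext ?_ (Prod.ext ?_ ?_) <;>
        simp [BalancedTensor.rsmul_mk'', mk_add_right, smul_add] <;> abel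
  | add a b ha hb =>
      rw [BalancedTensor.qmk_add]; erw [smul_add, map_add, ha, hb, map_add, smul_add]

end TriEquiv

/-! ### the final reshuffling equivalence -/

section TriFF
open BalancedTensor

variable (A B : Type*) [Ring A] [Ring B]
variable (M : Type*) [AddCommGroup M] [Module A M] [Module Bᵐᵒᵖ M]
variable [SMulCommClass A Bᵐᵒᵖ M] [SMulCommClass Bᵐᵒᵖ A M]
variable (N : Type*) [AddCommGroup N] [Module B N] [Module Aᵐᵒᵖ N]
variable [SMulCommClass B Aᵐᵒᵖ N] [SMulCommClass Aᵐᵒᵖ B N]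
variable (X : Type*) [AddCommGroup X] [Module A X] [Module Aᵐᵒᵖ X] [SMulCommClass A Aᵐᵒᵖ X]

/-- Reshuffle an `A ⊕ X`-valued triangular matrix into a pair. -/
noncomputable def ffEquiv (e : BalancedTensor B M N ≃+ (A × X)) :
    T2Mod (BalancedTensor B M N) ≃+ ((T2 A) × T2Mod X) where
  toFun u := (t2mk (e u.1).1 (e u.2.1).1 (e u.2.2).1, ((e u.1).2, (e u.2.1).2, (e u.2.2).2))
  invFun p := (e.symm (T2.c00 p.1, p.2.1), e.symm (T2.c01 p.1, p.2.2.1),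
    e.symm (T2.c11 p.1, p.2.2.2))
  left_inv u := by
    refine Prod.ext ?_ (Prod.ext ?_ ?_) <;> simp
  right_inv p := by
    refine Prod.ext ?_ (Prod.ext ?_ ?_) <;> simp [t2mk_eta]
  map_add' u v := by
    refine Prod.ext ?_ (Prod.ext ?_ ?_) <;>
      simp [t2mk_add, Prod.ext_iff]

lemma ffEquiv_lsmul (e : BalancedTensor B M N ≃+ (A × X))
    (heₗ : ∀ (a : A) (t : BalancedTensor B M N), e (a • t) = a • e t)
    (s : T2 A) (u : T2Mod (BalancedTensor B M N)) :
    ffEquiv A B M N X e (s • u) = s • ffEquiv A B M N X e u := by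
  obtain ⟨u1, u2, u3⟩ := u
  rw [T2Mod.lsmul_def]
  refine Prod.ext ?_ (Prod.ext ?_ ?_)
  · show t2mk (e (T2.c00 s • u1)).1 (e (T2.c00 s • u2 + T2.c01 s • u3)).1
        (e (T2.c11 s • u3)).1
      = s * t2mk (e u1).1 (e u2).1 (e u3).1
    rw [map_add, heₗ, heₗ, heₗ, heₗ]
    conv_rhs => rw [← t2mk_eta s]
    rw [t2mk_mul]
    simp [smul_eq_mul]
  · show (e (T2.c00 s • u1)).2 = (s • ((e u1).2, (e u2).2, (e u3).2) : T2Mod X).1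
    rw [heₗ, T2Mod.lsmul_def]
    rfl
  · show ((e (T2.c00 s • u2 + T2.c01 s • u3)).2, (e (T2.c11 s • u3)).2)
      = (s • ((e u1).2, (e u2).2, (e u3).2) : T2Mod X).2
    rw [map_add, heₗ, heₗ, heₗ, T2Mod.lsmul_def]
    rfl

lemma ffEquiv_rsmul (e : BalancedTensor B M N ≃+ (A × X))
    (heᵣ : ∀ (a : Aᵐᵒᵖ) (t : BalancedTensor B M N), e (a • t) = a • e t)
    (s : (T2 A)ᵐᵒᵖ) (u : T2Mod (BalancedTensor B M N)) :
    ffEquiv A B M N X e (s • u) = s • ffEquiv A B M N X e u := by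
  obtain ⟨u1, u2, u3⟩ := u
  rw [T2Mod.rsmul_def]
  refine Prod.ext ?_ (Prod.ext ?_ ?_)
  · show t2mk (e ((op (T2.c00 s.unop) : Aᵐᵒᵖ) • u1)).1
        (e ((op (T2.c01 s.unop) : Aᵐᵒᵖ) • u1 + (op (T2.c11 s.unop) : Aᵐᵒᵖ) • u2)).1
        (e ((op (T2.c11 s.unop) : Aᵐᵒᵖ) • u3)).1
      = t2mk (e u1).1 (e u2).1 (e u3).1 * s.unop
    rw [map_add, heᵣ, heᵣ, heᵣ, heᵣ]
    conv_rhs => rw [← t2mk_eta s.unop]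
    rw [t2mk_mul]
    simp [MulOpposite.smul_eq_mul_unop]
  · show (e ((op (T2.c00 s.unop) : Aᵐᵒᵖ) • u1)).2
      = (s • ((e u1).2, (e u2).2, (e u3).2) : T2Mod X).1
    rw [heᵣ, T2Mod.rsmul_def]
    rfl
  · show ((e ((op (T2.c01 s.unop) : Aᵐᵒᵖ) • u1 + (op (T2.c11 s.unop) : Aᵐᵒᵖ) • u2)).2,
        (e ((op (T2.c11 s.unop) : Aᵐᵒᵖ) • u3)).2)
      = (s • ((e u1).2, (e u2).2, (e u3).2) : T2Mod X).2
    rw [map_add, heᵣ, heᵣ, heᵣ, T2Mod.rsmul_def]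
    rfl

end TriFF
end TriangularAux


/-- If `M ⊗_B N ≅ A ⊕ X` as `(A,A)`-bimodules and `N ⊗_A M ≅ B ⊕ Y` as `(B,B)`-bimodules,
then for the upper triangular matrix algebras `T₂(A)`, `T₂(B)` and the triangular matrix
bimodules `T₂(M)`, `T₂(N)`, `T₂(X)` one has
`T₂(M) ⊗_{T₂(B)} T₂(N) ≅ T₂(A) ⊕ T₂(X)` as `T₂(A)`-bimodules. -/
theorem triangular_tensor_decomposition
    (A B : Type u) [Ring A] [Ring B]
    (M : Type u) [AddCommGroup M] [Module A M] [Module Bᵐᵒᵖ M]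
    [SMulCommClass A Bᵐᵒᵖ M] [SMulCommClass Bᵐᵒᵖ A M]
    (N : Type u) [AddCommGroup N] [Module B N] [Module Aᵐᵒᵖ N]
    [SMulCommClass B Aᵐᵒᵖ N] [SMulCommClass Aᵐᵒᵖ B N]
    (X : Type u) [AddCommGroup X] [Module A X] [Module Aᵐᵒᵖ X] [SMulCommClass A Aᵐᵒᵖ X]
    (Y : Type u) [AddCommGroup Y] [Module B Y] [Module Bᵐᵒᵖ Y] [SMulCommClass B Bᵐᵒᵖ Y]
    (e : BalancedTensor B M N ≃+ (A × X))
    (heₗ : ∀ (a : A) (t : BalancedTensor B M N), e (a • t) = a • e t)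
    (heᵣ : ∀ (a : Aᵐᵒᵖ) (t : BalancedTensor B M N), e (a • t) = a • e t)
    (e' : BalancedTensor A N M ≃+ (B × Y))
    (he'ₗ : ∀ (b : B) (t : BalancedTensor A N M), e' (b • t) = b • e' t)
    (he'ᵣ : ∀ (b : Bᵐᵒᵖ) (t : BalancedTensor A N M), e' (b • t) = b • e' t) :
    ∃ E : BalancedTensor (T2 B) (T2Mod M) (T2Mod N) ≃+ ((T2 A) × T2Mod X),
      (∀ (s : T2 A) (t : BalancedTensor (T2 B) (T2Mod M) (T2Mod N)),
        E (s • t) = s • E t) ∧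
      (∀ (s : (T2 A)ᵐᵒᵖ) (t : BalancedTensor (T2 B) (T2Mod M) (T2Mod N)),
        E (s • t) = s • E t) := by
  let E0 : BalancedTensor (T2 B) (T2Mod M) (T2Mod N) ≃+ T2Mod (BalancedTensor B M N) :=
    AddMonoidHom.toAddEquiv (triPhi B M N) (triPsi B M N)
      (AddMonoidHom.ext (triPsi_triPhi B M N)) (AddMonoidHom.ext (triPhi_triPsi B M N))
  refine ⟨E0.trans (ffEquiv A B M N X e), ?_, ?_⟩
  · intro s t
    show ffEquiv A B M N X e (triPhi B M N (s • t))
      = s • ffEquiv A B M N X e (triPhi B M N t)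
    rw [triPhi_lsmul A B M N, ffEquiv_lsmul A B M N X e heₗ]
  · intro s t
    show ffEquiv A B M N X e (triPhi B M N (s • t))
      = s • ffEquiv A B M N X e (triPhi B M N t)
    rw [triPhi_rsmul A B M N, ffEquiv_rsmul A B M N X e heᵣ]
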